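/- For fixed reals a ≥ 0, b ≥ 0 and m, n with n > -1, m+n+1 > 0, the truncated-series approximation S_p = ∑_{l=0}^p a^{2l} e^{-a²/2} Γ(p+l) p^{1-2l} Γ((m+n+2l+1)/2, b²/2) / (l! Γ(n+l+1) 2^{(n-m+2l+1)/2} Γ(p-l+1)) converges, as p → ∞, to the exact series ∑_{l=0}^∞ a^{2l} e^{-a²/2} Γ((m+n+2l+1)/2, b²/2) / (l! Γ(n+l+1) 2^{(n-m+2l+1)/2}); in particular, for each fixed l, the coefficient Γ(p+l) p^{1-2l} / Γ(p-l+1) tends to 1 as p → ∞. -/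

import Mathlib

/-!
For `l ≤ p` the coefficient `Γ(p + l) p^(1 - 2l) / Γ(p - l + 1)` equals
`∏_{i < 2l} (p - l + 1 + i) / p · p / (p + l)`: it tends to `1`, and it lies in `[0, 4^l]`
since every factor of the product lies in `[0, 2]`. The terms of the truncated sums are thus
dominated by `4^l` times the terms of the limiting series, and, as `Γ(s, x) ≤ Γ(s)`, these are
bounded by a multiple of `(2a²)^l Γ(s + l) / (l! Γ(n + 1 + l))` with `s = (m + n + 1) / 2`,
which is summable by the ratio test. Tannery's theorem (dominated convergence for series) concludes.
-/

open MeasureTheory Real Filter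

noncomputable def uGamma (a x : ℝ) : ℝ := ∫ t in Set.Ioi x, t ^ (a - 1) * Real.exp (-t)

noncomputable def lGamma (a x : ℝ) : ℝ := ∫ t in Set.Ioc 0 x, t ^ (a - 1) * Real.exp (-t)

noncomputable def poch (x : ℝ) (l : ℕ) : ℝ := ∏ i ∈ Finset.range l, (x + i)

noncomputable def besselI (n x : ℝ) : ℝ :=
  ∑' l : ℕ, (x / 2) ^ (n + 2 * (l : ℝ)) / ((l.factorial : ℝ) * Real.Gamma (n + (l : ℝ) + 1))

noncomputable def oneF₁ (α β x : ℝ) : ℝ :=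
  ∑' i : ℕ, (poch α i / poch β i) * x ^ i / (i.factorial : ℝ)

noncomputable def nuttallQ (m n a b : ℝ) : ℝ :=
  ∫ x in Set.Ioi b, x ^ m * Real.exp (-(x ^ 2 + a ^ 2) / 2) * besselI n (a * x)

noncomputable def nQ (m n a b : ℝ) : ℝ := a ^ (-n) * nuttallQ m n a b

noncomputable def marcumQ (ν a b : ℝ) : ℝ :=
  a ^ (1 - ν) * ∫ x in Set.Ioi b, x ^ ν * Real.exp (-(x ^ 2 + a ^ 2) / 2) * besselI (ν - 1) (a * x)

noncomputable def toronto (B m n r : ℝ) : ℝ :=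
  2 * r ^ (n - m + 1) * Real.exp (-r ^ 2) *
    ∫ t in Set.Ioo 0 B, t ^ (m - n) * Real.exp (-t ^ 2) * besselI n (2 * r * t)

open Finset Topology
open scoped Nat

lemma Real.Gamma_add_nat_eq_prod_mul_Gamma {x : ℝ} (hx : 0 < x) (k : ℕ) :
    Gamma (x + k) = (∏ i ∈ range k, (x + i)) * Gamma x := by
  induction k with
  | zero => simp
  | succ k ih =>
    rw [Nat.cast_succ, ← add_assoc, Gamma_add_one (by positivity), ih, prod_range_succ]
    ring

lemma uGamma_nonneg (s : ℝ) {x : ℝ} (hx : 0 ≤ x) : 0 ≤ uGamma s x :=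
  setIntegral_nonneg measurableSet_Ioi fun _ ht =>
    mul_nonneg (rpow_nonneg (hx.trans ht.le) _) (exp_pos _).le

lemma uGamma_le_Gamma {s x : ℝ} (hs : 0 < s) (hx : 0 ≤ x) : uGamma s x ≤ Gamma s := by
  have hint : IntegrableOn (fun t : ℝ => t ^ (s - 1) * exp (-t)) (Set.Ioi 0) :=
    (GammaIntegral_convergent hs).congr_fun (fun _ _ => mul_comm _ _) measurableSet_Ioi
  rw [Gamma_eq_integral hs]
  calc uGamma s x ≤ ∫ t in Set.Ioi 0, t ^ (s - 1) * exp (-t) := by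
        refine setIntegral_mono_set hint ?_ (Set.Ioi_subset_Ioi hx).eventuallyLE
        filter_upwards [ae_restrict_mem measurableSet_Ioi] with t ht
        exact mul_nonneg (rpow_nonneg ht.le _) (exp_pos _).le
    _ = ∫ t in Set.Ioi 0, exp (-t) * t ^ (s - 1) := by simp only [mul_comm]

lemma summable_pow_mul_Gamma_add_div (x : ℝ) {α β : ℝ} (hα : 0 < α) (hβ : 0 < β) :
    Summable fun l : ℕ => x ^ l * Gamma (α + l) / (l ! * Gamma (β + l)) := by
  set f := fun l : ℕ => x ^ l * Gamma (α + l) / (l ! * Gamma (β + l))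
  set q := fun l : ℕ => (α + l) / ((l + 1) * (β + l))
  have hrec (l : ℕ) : ‖f (l + 1)‖ = |x| * q l * ‖f l‖ := by
    have hstep : f (l + 1) = x * q l * f l := by
      simp only [f, q]
      push_cast
      rw [← add_assoc, ← add_assoc, Gamma_add_one (by positivity),
        Gamma_add_one (by positivity), Nat.factorial_succ]
      have hΓβ := Gamma_pos_of_pos (by positivity : 0 < β + l)
      push_cast
      field_simp
      ring
    rw [hstep, norm_mul, norm_mul, norm_eq_abs, norm_eq_abs (q l),
      abs_of_nonneg (by positivity : 0 ≤ q l)]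
  have hq : Tendsto q atTop (𝓝 0) := by
    have h1 : Tendsto (fun l : ℕ => (α + 1 * l) / (1 + 1 * l)) atTop (𝓝 1) := by
      simpa using tendsto_add_mul_div_add_mul_atTop_nhds α 1 (1 : ℝ) one_ne_zero
    have h2 : Tendsto (fun l : ℕ => (β + l)⁻¹) atTop (𝓝 0) :=
      tendsto_inv_atTop_zero.comp (tendsto_atTop_add_const_left _ β tendsto_natCast_atTop_atTop)
    have h12 := h1.mul h2
    rw [one_mul] at h12
    refine h12.congr fun l => ?_
    simp only [q, one_mul]
    field_simp
    ring
  refine summable_of_ratio_norm_eventually_le (r := 1 / 2) (by norm_num) ?_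
  filter_upwards [(hq.const_mul |x|).eventually_le_const (by norm_num : |x| * 0 < 1 / 2)]
    with l hl
  rw [hrec]
  exact mul_le_mul_of_nonneg_right hl (norm_nonneg _)

lemma tendsto_sum_range_succ_of_dominated {G : Type*} [NormedAddCommGroup G] [CompleteSpace G]
    {f : ℕ → ℕ → G} {g : ℕ → G} {bound : ℕ → ℝ} (h_sum : Summable bound)
    (hfg : ∀ l, Tendsto (f · l) atTop (𝓝 (g l)))
    (h_bound : ∀ᶠ p in atTop, ∀ l ≤ p, ‖f p l‖ ≤ bound l) :
    Tendsto (fun p => ∑ l ∈ range (p + 1), f p l) atTop (𝓝 (∑' l, g l)) := by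
  obtain ⟨p₀, hp₀⟩ := eventually_atTop.mp h_bound
  have bound_nonneg (l : ℕ) : 0 ≤ bound l :=
    (norm_nonneg _).trans (hp₀ (max p₀ l) (le_max_left _ _) l (le_max_right _ _))
  have hF : Tendsto (fun p => ∑' l, if l ≤ p then f p l else 0) atTop (𝓝 (∑' l, g l)) := by
    refine tendsto_tsum_of_dominated_convergence h_sum (fun l => ?_) ?_
    · exact (hfg l).congr' <| (eventually_ge_atTop l).mono fun p hp => (if_pos hp).symm
    · filter_upwards [h_bound] with p hp l
      split_ifs with hl
      · exact hp l hl
      · simpa using bound_nonneg l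
  refine hF.congr fun p => ?_
  rw [tsum_eq_sum (s := range (p + 1)) fun l hl => if_neg (by simpa [Nat.lt_succ_iff] using hl)]
  exact sum_congr rfl fun l hl => if_pos (Nat.lt_succ_iff.mp (mem_range.mp hl))

noncomputable def gammaRatio (p l : ℕ) : ℝ :=
  Gamma ((p : ℝ) + l) * (p : ℝ) ^ (1 - 2 * (l : ℝ)) / Gamma ((p : ℝ) - l + 1)

lemma gammaRatio_eq_prod {p l : ℕ} (hp : 0 < p) (hlp : l ≤ p) :
    gammaRatio p l = (∏ i ∈ range (2 * l), (((p : ℝ) - l + 1 + i) / p)) * (p / (p + l)) := by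
  have hlpR : (l : ℝ) ≤ p := by exact_mod_cast hlp
  have hpR : (0 : ℝ) < p := by exact_mod_cast hp
  have hx : (0 : ℝ) < p - l + 1 := by linarith
  have hΓ : Gamma ((p : ℝ) + l) =
      (∏ i ∈ range (2 * l), ((p : ℝ) - l + 1 + i)) * Gamma ((p : ℝ) - l + 1) / (p + l) := by
    rw [eq_div_iff (by positivity), mul_comm, ← Gamma_add_one (by positivity),
      ← Gamma_add_nat_eq_prod_mul_Gamma hx]
    push_cast
    ring_nf
  have hpow : (p : ℝ) ^ (1 - 2 * (l : ℝ)) = p / p ^ (2 * l) := by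
    rw [rpow_sub hpR, rpow_one, ← rpow_natCast]
    push_cast
    rfl
  have hΓx := Gamma_pos_of_pos hx
  rw [gammaRatio, hΓ, hpow, prod_div_distrib, prod_const, card_range]
  field_simp

lemma tendsto_gammaRatio (l : ℕ) : Tendsto (gammaRatio · l) atTop (𝓝 1) := by
  have hfactor (c : ℝ) : Tendsto (fun p : ℕ => (c + p) / p) atTop (𝓝 1) := by
    simpa using tendsto_add_mul_div_add_mul_atTop_nhds c 0 (1 : ℝ) one_ne_zero
  have hprod := (tendsto_finsetProd (range (2 * l))
    fun i _ => hfactor (-l + 1 + i)).mul (tendsto_natCast_div_add_atTop (l : ℝ))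
  rw [prod_const_one, one_mul] at hprod
  refine hprod.congr' <| (eventually_ge_atTop (max l 1)).mono fun p hp => ?_
  dsimp only
  rw [gammaRatio_eq_prod (by omega) (by omega)]
  exact congrArg (· * _) (prod_congr rfl fun i _ => by ring)

lemma gammaRatio_nonneg {p l : ℕ} (hlp : l ≤ p) : 0 ≤ gammaRatio p l := by
  have hlpR : (l : ℝ) ≤ p := by exact_mod_cast hlp
  exact div_nonneg (mul_nonneg (Gamma_nonneg_of_nonneg (by positivity)) (by positivity))
    (Gamma_pos_of_pos (by linarith)).le

lemma gammaRatio_le_four_pow {p l : ℕ} (hp : 0 < p) (hlp : l ≤ p) :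
    gammaRatio p l ≤ 4 ^ l := by
  have hlpR : (l : ℝ) ≤ p := by exact_mod_cast hlp
  have hpR : (0 : ℝ) < p := by exact_mod_cast hp
  have hfactor : ∀ i ∈ range (2 * l),
      0 ≤ ((p : ℝ) - l + 1 + i) / p ∧ ((p : ℝ) - l + 1 + i) / p ≤ 2 := by
    intro i hi
    have hi' : (i : ℝ) + 1 ≤ 2 * l := by exact_mod_cast mem_range.mp hi
    refine ⟨div_nonneg (by positivity) hpR.le, (div_le_iff₀ hpR).mpr (by linarith)⟩
  rw [gammaRatio_eq_prod hp hlp]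
  calc (∏ i ∈ range (2 * l), (((p : ℝ) - l + 1 + i) / p)) * (p / (p + l))
      ≤ (∏ _i ∈ range (2 * l), (2 : ℝ)) * 1 :=
        mul_le_mul (prod_le_prod (fun i hi => (hfactor i hi).1) (fun i hi => (hfactor i hi).2))
          (div_le_one_of_le₀ (by linarith) (by positivity)) (by positivity) (by positivity)
    _ = 4 ^ l := by rw [prod_const, card_range, pow_mul]; norm_num

noncomputable def seriesTerm (m n a b : ℝ) (l : ℕ) : ℝ :=
  a ^ (2 * l) * exp (-a ^ 2 / 2) * uGamma ((m + n + 2 * (l : ℝ) + 1) / 2) (b ^ 2 / 2) /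
    (l ! * Gamma (n + (l : ℝ) + 1) * (2 : ℝ) ^ ((n - m + 2 * (l : ℝ) + 1) / 2))

section seriesTerm

variable {m n : ℝ} (a b : ℝ)

lemma seriesTerm_nonneg (hn : -1 < n) (l : ℕ) : 0 ≤ seriesTerm m n a b l := by
  have := Gamma_pos_of_pos (by linarith [l.cast_nonneg (α := ℝ)] : 0 < n + 1 + l)
  rw [seriesTerm, pow_mul, add_right_comm n]
  have := uGamma_nonneg ((m + n + 2 * (l : ℝ) + 1) / 2) (by positivity : 0 ≤ b ^ 2 / 2)
  positivity

lemma seriesTerm_mul_four_pow_le (hn : -1 < n) (hmn : 0 < m + n + 1) (l : ℕ) :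
    seriesTerm m n a b l * 4 ^ l ≤ exp (-a ^ 2 / 2) / 2 ^ ((n - m + 1) / 2) *
      ((2 * a ^ 2) ^ l * Gamma ((m + n + 1) / 2 + l) / (l ! * Gamma (n + 1 + l))) := by
  have hΓ := Gamma_pos_of_pos (by linarith [l.cast_nonneg (α := ℝ)] : 0 < n + 1 + l)
  have h2 : (2 : ℝ) ^ ((n - m + 2 * (l : ℝ) + 1) / 2) = 2 ^ ((n - m + 1) / 2) * 2 ^ l := by
    rw [← rpow_natCast, ← rpow_add two_pos]
    ring_nf
  have hsplit : seriesTerm m n a b l * 4 ^ l = exp (-a ^ 2 / 2) / 2 ^ ((n - m + 1) / 2) *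
      ((2 * a ^ 2) ^ l * uGamma ((m + n + 1) / 2 + l) (b ^ 2 / 2) /
        (l ! * Gamma (n + 1 + l))) := by
    rw [seriesTerm, h2, add_right_comm n,
      show (4 : ℝ) ^ l = 2 ^ l * 2 ^ l by rw [← mul_pow]; norm_num,
      show (m + n + 2 * (l : ℝ) + 1) / 2 = (m + n + 1) / 2 + l by ring, mul_pow, pow_mul]
    field_simp
  rw [hsplit]
  gcongr
  exact uGamma_le_Gamma (by positivity) (by positivity)

lemma summable_seriesTerm_mul_four_pow (hn : -1 < n) (hmn : 0 < m + n + 1) :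
    Summable fun l => seriesTerm m n a b l * 4 ^ l :=
  .of_nonneg_of_le (fun l => mul_nonneg (seriesTerm_nonneg a b hn l) (by positivity))
    (seriesTerm_mul_four_pow_le a b hn hmn)
    ((summable_pow_mul_Gamma_add_div (2 * a ^ 2) (by positivity) (by linarith)).mul_left _)

end seriesTerm

theorem stmt19_general (m n a b : ℝ) (hn : -1 < n) (hmn : 0 < m + n + 1) :
    Filter.Tendsto (fun p : ℕ =>
        ∑ l ∈ Finset.range (p + 1),
          a ^ (2 * l) * Real.exp (-a ^ 2 / 2) * Real.Gamma ((p : ℝ) + (l : ℝ)) *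
            (p : ℝ) ^ (1 - 2 * (l : ℝ)) * uGamma ((m + n + 2 * (l : ℝ) + 1) / 2) (b ^ 2 / 2) /
            ((l.factorial : ℝ) * Real.Gamma (n + (l : ℝ) + 1) *
              (2 : ℝ) ^ ((n - m + 2 * (l : ℝ) + 1) / 2) * Real.Gamma ((p : ℝ) - (l : ℝ) + 1)))
      Filter.atTop
      (nhds (∑' l : ℕ,
        a ^ (2 * l) * Real.exp (-a ^ 2 / 2) * uGamma ((m + n + 2 * (l : ℝ) + 1) / 2) (b ^ 2 / 2) /
          ((l.factorial : ℝ) * Real.Gamma (n + (l : ℝ) + 1) *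
            (2 : ℝ) ^ ((n - m + 2 * (l : ℝ) + 1) / 2)))) ∧
    ∀ l : ℕ, Filter.Tendsto (fun p : ℕ =>
        Real.Gamma ((p : ℝ) + (l : ℝ)) * (p : ℝ) ^ (1 - 2 * (l : ℝ)) /
          Real.Gamma ((p : ℝ) - (l : ℝ) + 1))
      Filter.atTop (nhds 1) := by
  refine ⟨?_, tendsto_gammaRatio⟩
  have hbound : ∀ᶠ p in atTop, ∀ l ≤ p,
      ‖seriesTerm m n a b l * gammaRatio p l‖ ≤ seriesTerm m n a b l * 4 ^ l := by
    filter_upwards [eventually_gt_atTop 0] with p hp l hlp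
    rw [norm_mul, norm_of_nonneg (seriesTerm_nonneg a b hn l),
      norm_of_nonneg (gammaRatio_nonneg hlp)]
    exact mul_le_mul_of_nonneg_left (gammaRatio_le_four_pow hp hlp) (seriesTerm_nonneg a b hn l)
  have hlim := tendsto_sum_range_succ_of_dominated (summable_seriesTerm_mul_four_pow a b hn hmn)
    (fun l => by simpa using (tendsto_gammaRatio l).const_mul (seriesTerm m n a b l)) hbound
  refine hlim.congr fun p => sum_congr rfl fun l _ => ?_
  rw [seriesTerm, gammaRatio]
  ring

theorem stmt19 (m n a b : ℝ) (hn : -1 < n) (hmn : 0 < m + n + 1) (ha : 0 ≤ a) (hb : 0 ≤ b) :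
    Filter.Tendsto (fun p : ℕ =>
        ∑ l ∈ Finset.range (p + 1),
          a ^ (2 * l) * Real.exp (-a ^ 2 / 2) * Real.Gamma ((p : ℝ) + (l : ℝ)) *
            (p : ℝ) ^ (1 - 2 * (l : ℝ)) * uGamma ((m + n + 2 * (l : ℝ) + 1) / 2) (b ^ 2 / 2) /
            ((l.factorial : ℝ) * Real.Gamma (n + (l : ℝ) + 1) *
              (2 : ℝ) ^ ((n - m + 2 * (l : ℝ) + 1) / 2) * Real.Gamma ((p : ℝ) - (l : ℝ) + 1)))
      Filter.atTop
      (nhds (∑' l : ℕ,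
        a ^ (2 * l) * Real.exp (-a ^ 2 / 2) * uGamma ((m + n + 2 * (l : ℝ) + 1) / 2) (b ^ 2 / 2) /
          ((l.factorial : ℝ) * Real.Gamma (n + (l : ℝ) + 1) *
            (2 : ℝ) ^ ((n - m + 2 * (l : ℝ) + 1) / 2)))) ∧
    ∀ l : ℕ, Filter.Tendsto (fun p : ℕ =>
        Real.Gamma ((p : ℝ) + (l : ℝ)) * (p : ℝ) ^ (1 - 2 * (l : ℝ)) /
          Real.Gamma ((p : ℝ) - (l : ℝ) + 1))
      Filter.atTop (nhds 1) :=
  stmt19_general m n a b hn hmn
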